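/- arXiv:0912.1125 — 3 statements merged into one kernel-verified Lean document; each statement's English description precedes it below -/
import Mathlib

section
/- For every continuous compactly supported function f : G → A, the function (x, yH) ↦ ‖f(x) + J_{yH}‖ (the quotient norm, i.e. the distance inf{‖f(x) − j‖ : j ∈ J_{yH}} from f(x) to the ideal J_{yH}) is upper semicontinuous on the product space G × (G/H). -/
open scoped MultiplierAlgebra ZeroAtInfty

/-- The ideal `J_{yH}` of the `C₀(G/H)`-algebra `A`: the closed linear span of
`{Φ(φ)·a : φ ∈ C₀(G/H), φ(yH) = 0, a ∈ A}`.  Here `Φ(φ)·a` is expressed as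
`(Φ φ).fst a`, the left part of the double centralizer `Φ φ` applied to `a`. -/
noncomputable def idealJ {G : Type*} [Group G] [TopologicalSpace G] [IsTopologicalGroup G]
    (H : Subgroup G) {A : Type*} [NonUnitalCStarAlgebra A]
    (Φ : C₀(G ⧸ H, ℂ) →⋆ₙₐ[ℂ] 𝓜(ℂ, A)) (yH : G ⧸ H) : Set A :=
  closure (Submodule.span ℂ
    {b : A | ∃ (φ : C₀(G ⧸ H, ℂ)) (a : A), φ yH = 0 ∧ b = (Φ φ).fst a} : Set A)

/-! Fix `a ∈ A` and `y₀` with `dist(a, J_{y₀}) < c`, and pick `b` in the span of the generators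
`Φ(φ)a'` (`φ(y₀) = 0`) with `‖a - b‖ < c`. Take `ψ ∈ C₀(G/H)` equal to `1` near `y₀`; replacing
each generator `Φ(φ)a'` by `Φ(φ - φ(y)ψ)a'` turns `b` into an element `b - h(y)` of `J_y` for `y`
near `y₀`, where `h` is continuous with `h(y₀) = 0`. Hence `dist(a, J_y) < c` near `y₀`, and joint
upper semicontinuity in `(x, y)` follows because `a ↦ dist(a, J_y)` is `1`-Lipschitz. -/

open Filter Topology Metric

theorem upperSemicontinuous_infDist_comp_prod {X Y E : Type*} [TopologicalSpace X]
    [TopologicalSpace Y] [PseudoMetricSpace E] {s : Y → Set E}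
    (hs : ∀ a, UpperSemicontinuous fun y => infDist a (s y)) {f : X → E} (hf : Continuous f) :
    UpperSemicontinuous fun p : X × Y => infDist (f p.1) (s p.2) := by
  rintro ⟨x₀, y₀⟩ c (hc : infDist (f x₀) (s y₀) < c)
  set d := infDist (f x₀) (s y₀)
  have near_x : ∀ᶠ x in 𝓝 x₀, dist (f x) (f x₀) < (c - d) / 2 :=
    tendsto_nhds.mp hf.continuousAt _ (by linarith)
  have near_y : ∀ᶠ y in 𝓝 y₀, infDist (f x₀) (s y) < (c + d) / 2 :=
    hs (f x₀) y₀ _ (by linarith)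
  filter_upwards [near_x.prod_nhds near_y] with p ⟨hx, hy⟩
  linarith [infDist_le_infDist_add_dist (x := f p.1) (y := f x₀) (s := s p.2)]

theorem ZeroAtInftyContinuousMap.exists_eventually_eq_one {X : Type*} [TopologicalSpace X]
    [R1Space X] [LocallyCompactSpace X] (x : X) : ∃ ψ : C₀(X, ℂ), ∀ᶠ y in 𝓝 x, ψ y = 1 := by
  obtain ⟨K, hK, hKx⟩ := exists_compact_mem_nhds x
  obtain ⟨f, hfK, -, hfc, -⟩ :=
    exists_continuous_one_zero_of_isCompact hK isClosed_empty (Set.disjoint_empty K)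
  refine ⟨⟨⟨fun y => (f y : ℂ), by fun_prop⟩,
    (hfc.comp_left Complex.ofReal_zero).is_zero_at_infty⟩, ?_⟩
  filter_upwards [hKx] with y hy
  simpa using congrArg ((↑) : ℝ → ℂ) (hfK hy)

section FiberIdeal

variable {X : Type*} [TopologicalSpace X] {A : Type*} [NonUnitalCStarAlgebra A]
  (Φ : C₀(X, ℂ) →⋆ₙₐ[ℂ] 𝓜(ℂ, A))

def fiberIdealGenerators (y : X) : Set A :=
  {b | ∃ (φ : C₀(X, ℂ)) (a : A), φ y = 0 ∧ b = (Φ φ).fst a}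

def fiberIdeal (y : X) : Set A :=
  closure (Submodule.span ℂ (fiberIdealGenerators Φ y) : Set A)

variable {Φ}

theorem exists_continuous_sub_mem_span_fiberIdealGenerators {ψ : C₀(X, ℂ)} {y₀ : X}
    (hψ : ∀ᶠ y in 𝓝 y₀, ψ y = 1) {b : A}
    (hb : b ∈ Submodule.span ℂ (fiberIdealGenerators Φ y₀)) :
    ∃ h : X → A, Continuous h ∧ h y₀ = 0 ∧
      ∀ᶠ y in 𝓝 y₀, b - h y ∈ Submodule.span ℂ (fiberIdealGenerators Φ y) := by
  induction hb using Submodule.span_induction with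
  | mem b hb =>
    obtain ⟨φ, a, hφ, rfl⟩ := hb
    refine ⟨fun y => φ y • (Φ ψ).fst a, by fun_prop, by simp [hφ], ?_⟩
    filter_upwards [hψ] with y hy
    refine Submodule.subset_span ⟨φ - φ y • ψ, a, by simp [hy], ?_⟩
    simp
  | zero => exact ⟨0, continuous_const, rfl, .of_forall fun y => by simp⟩
  | add u v _ _ hu hv =>
    obtain ⟨h₁, hc₁, h₁0, hm₁⟩ := hu
    obtain ⟨h₂, hc₂, h₂0, hm₂⟩ := hv
    refine ⟨h₁ + h₂, hc₁.add hc₂, by simp [h₁0, h₂0], ?_⟩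
    filter_upwards [hm₁, hm₂] with y hy₁ hy₂
    simpa [add_sub_add_comm] using Submodule.add_mem _ hy₁ hy₂
  | smul r u _ hu =>
    obtain ⟨h, hc, h0, hm⟩ := hu
    refine ⟨r • h, hc.const_smul r, by simp [h0], ?_⟩
    filter_upwards [hm] with y hy
    simpa [smul_sub] using Submodule.smul_mem _ r hy

theorem upperSemicontinuous_infDist_fiberIdeal [R1Space X] [LocallyCompactSpace X] (a : A) :
    UpperSemicontinuous fun y => infDist a (fiberIdeal Φ y) := by
  intro y₀ c (hc : infDist a (fiberIdeal Φ y₀) < c)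
  rw [fiberIdeal, infDist_closure] at hc
  obtain ⟨b, hb, hab⟩ := (infDist_lt_iff ⟨0, Submodule.zero_mem _⟩).mp hc
  obtain ⟨ψ, hψ⟩ := ZeroAtInftyContinuousMap.exists_eventually_eq_one y₀
  obtain ⟨h, hh, h0, hmem⟩ := exists_continuous_sub_mem_span_fiberIdealGenerators hψ hb
  have near : ∀ᶠ y in 𝓝 y₀, dist a (b - h y) < c :=
    (continuous_const.dist (continuous_const.sub hh)).continuousAt.eventually_lt
      continuousAt_const (by simpa [h0] using hab)
  filter_upwards [near, hmem] with y hy hby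
  exact (infDist_le_dist_of_mem (subset_closure hby)).trans_lt hy

end FiberIdeal

theorem usc_quotient_norm_general
    {G : Type*} [Group G] [TopologicalSpace G] [IsTopologicalGroup G]
    [LocallyCompactSpace G]
    (H : Subgroup G) (hH : IsClosed (H : Set G))
    {A : Type*} [NonUnitalCStarAlgebra A]
    (Φ : C₀(G ⧸ H, ℂ) →⋆ₙₐ[ℂ] 𝓜(ℂ, A))
    (f : G → A) (hf : Continuous f) :
    UpperSemicontinuous fun p : G × (G ⧸ H) => Metric.infDist (f p.1) (idealJ H Φ p.2) := by
  -- as an instance, `hH` makes `G ⧸ H` Hausdorff, hence `R1Space`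
  have : IsClosed (H : Set G) := hH
  exact upperSemicontinuous_infDist_comp_prod upperSemicontinuous_infDist_fiberIdeal hf

/-- For every continuous compactly supported `f : G → A`, the function
`(x, yH) ↦ ‖f(x) + J_{yH}‖` (quotient norm, i.e. the distance from `f x` to `J_{yH}`)
is upper semicontinuous on `G × (G/H)`. -/
theorem usc_quotient_norm
    {G : Type*} [Group G] [TopologicalSpace G] [IsTopologicalGroup G]
    [LocallyCompactSpace G] [T2Space G] [SecondCountableTopology G]
    (H : Subgroup G) (hH : IsClosed (H : Set G))
    {A : Type*} [NonUnitalCStarAlgebra A]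
    (Φ : C₀(G ⧸ H, ℂ) →⋆ₙₐ[ℂ] 𝓜(ℂ, A))
    -- centrality: `Φ(φ)·a = a·Φ(φ)` for all `φ` and `a`
    (hcentral : ∀ (φ : C₀(G ⧸ H, ℂ)) (a : A), (Φ φ).fst a = (Φ φ).snd a)
    -- nondegeneracy: the closed linear span of `{Φ(φ)·a}` is all of `A`
    (hnondeg : closure (Submodule.span ℂ
        {b : A | ∃ (φ : C₀(G ⧸ H, ℂ)) (a : A), b = (Φ φ).fst a} : Set A) = Set.univ)
    (f : G → A) (hf : Continuous f) (hf' : HasCompactSupport f) :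
    UpperSemicontinuous fun p : G × (G ⧸ H) => Metric.infDist (f p.1) (idealJ H Φ p.2) :=
  usc_quotient_norm_general H hH Φ f hf
end

section
/- Let θ ∈ C₀(G × (G/H), ℂ) and let f : G → A be continuous with compact support. Then the function g : G → A defined by g(x) := Φ(θ(x,·))·f(x) (note θ(x,·) ∈ C₀(G/H) for each x) is continuous, its support is contained in the support of f, it satisfies g(x) − θ(x, yH)·f(x) ∈ J_{yH} for every x ∈ G and yH ∈ G/H, and sup_{x∈G} ‖g(x)‖ ≤ (sup_{(z,yH)∈G×(G/H)} |θ(z,yH)|) · (sup_{x∈G} ‖f(x)‖). -/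
/-! Continuity of `x ↦ Φ(θ(x,·))·f(x)` reduces to norm continuity of the slice map
`x ↦ θ(x,·)` into `C₀(G/H)`: off a compact set `K` the function `θ` is small, and on the
projection of `K` to `G/H` the slice `θ(x,·)` is uniformly close to `θ(x₀,·)` for `x` near `x₀`.
For the ideal `J_{yH}`, the operator `Φ(φ) - φ(yH)` sends each generator `Φ(ψ)·a` of `A` to
`Φ(φψ - φ(yH)ψ)·a`, a generator of `J_{yH}`; by nondegeneracy these generators are dense. -/

open scoped MultiplierAlgebra ZeroAtInfty CStarAlgebra
open Filter

namespace ZeroAtInftyContinuousMap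

variable {X Y E : Type*} [TopologicalSpace X] [TopologicalSpace Y] [NormedAddCommGroup E]

lemma norm_apply_le (φ : C₀(Y, E)) (y : Y) : ‖φ y‖ ≤ ‖φ‖ :=
  norm_toBCF_eq_norm (f := φ) ▸ φ.toBCF.norm_coe_le_norm y

lemma norm_eq_iSup_norm (φ : C₀(Y, E)) : ‖φ‖ = ⨆ y, ‖φ y‖ := by
  rw [← norm_toBCF_eq_norm, BoundedContinuousFunction.norm_eq_iSup_norm]
  rfl

lemma norm_slice_le (θ : C₀(X × Y, E)) {θs : X → C₀(Y, E)} (hθs : ∀ x y, θs x y = θ (x, y))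
    (x : X) : ‖θs x‖ ≤ ‖θ‖ := by
  rw [← norm_toBCF_eq_norm]
  exact (BoundedContinuousFunction.norm_le (norm_nonneg θ)).2 fun y =>
    (hθs x y).symm ▸ θ.norm_apply_le (x, y)

lemma continuous_slice (θ : C₀(X × Y, E)) {θs : X → C₀(Y, E)}
    (hθs : ∀ x y, θs x y = θ (x, y)) : Continuous θs := by
  refine continuous_iff_continuousAt.2 fun x₀ => Metric.tendsto_nhds.2 fun ε hε => ?_
  obtain ⟨K, hK, hθK⟩ : ∃ K : Set (X × Y), IsCompact K ∧ ∀ p ∉ K, ‖θ p‖ < ε / 4 := by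
    obtain ⟨K, hK, hKs⟩ :=
      mem_cocompact.1 (zero_at_infty θ (Metric.ball_mem_nhds 0 (by positivity : 0 < ε / 4)))
    exact ⟨K, hK, fun p hp => mem_ball_zero_iff.1 (hKs hp)⟩
  obtain ⟨V, hV, hθV⟩ := (hK.image continuous_snd).mem_uniformity_of_prod
    (f := fun x y => θ (x, y)) (map_continuous θ).continuousOn (Set.mem_univ x₀)
    (Metric.dist_mem_uniformity (half_pos hε))
  filter_upwards [nhdsWithin_univ x₀ ▸ hV] with x hx
  have hclose : ∀ y, dist (θs x y) (θs x₀ y) ≤ ε / 2 := fun y => by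
    rw [hθs, hθs]
    by_cases hy : y ∈ Prod.snd '' K
    · exact (hθV x hx y hy).le
    · have hout : ∀ x', (x', y) ∉ K := fun x' h => hy ⟨_, h, rfl⟩
      calc dist (θ (x, y)) (θ (x₀, y)) ≤ ‖θ (x, y)‖ + ‖θ (x₀, y)‖ := dist_le_norm_add_norm _ _
        _ ≤ ε / 2 := by linarith [hθK _ (hout x), hθK _ (hout x₀)]
  rw [← dist_toBCF_eq_dist]
  exact ((BoundedContinuousFunction.dist_le (half_pos hε).le).2 hclose).trans_lt (half_lt_self hε)

end ZeroAtInftyContinuousMap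

section MultiplierAction

variable {B A : Type*} [NonUnitalCStarAlgebra B] [NonUnitalCStarAlgebra A]

lemma DoubleCentralizer.continuous_fst : Continuous fun m : 𝓜(ℂ, A) => m.fst :=
  DoubleCentralizer.isUniformEmbedding_toProdMulOpposite.uniformContinuous.continuous.fst

lemma NonUnitalStarAlgHom.norm_fst_apply_le (Φ : B →⋆ₙₐ[ℂ] 𝓜(ℂ, A)) (b : B) (a : A) :
    ‖(Φ b).fst a‖ ≤ ‖b‖ * ‖a‖ :=
  (Φ b).fst.le_of_opNorm_le ((DoubleCentralizer.norm_fst _).trans_le (norm_apply_le Φ b)) a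

end MultiplierAction

lemma fst_apply_sub_smul_mem_idealJ {G : Type*} [Group G] [TopologicalSpace G]
    [IsTopologicalGroup G] (H : Subgroup G) {A : Type*} [NonUnitalCStarAlgebra A]
    (Φ : C₀(G ⧸ H, ℂ) →⋆ₙₐ[ℂ] 𝓜(ℂ, A))
    (hnondeg : closure (Submodule.span ℂ
        {b : A | ∃ (φ : C₀(G ⧸ H, ℂ)) (a : A), b = (Φ φ).fst a} : Set A) = Set.univ)
    (φ : C₀(G ⧸ H, ℂ)) (yH : G ⧸ H) (a : A) :
    (Φ φ).fst a - φ yH • a ∈ idealJ H Φ yH := by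
  let T : A →L[ℂ] A := (Φ φ).fst - φ yH • ContinuousLinearMap.id ℂ A
  have hT_generator (ψ : C₀(G ⧸ H, ℂ)) (b : A) :
      T ((Φ ψ).fst b) = (Φ (φ * ψ - φ yH • ψ)).fst b := by
    simp [T, DoubleCentralizer.mul_fst]
  have hT_span : Set.MapsTo T
      (Submodule.span ℂ {b : A | ∃ (ψ : C₀(G ⧸ H, ℂ)) (a : A), b = (Φ ψ).fst a})
      (Submodule.span ℂ {b : A | ∃ (ψ : C₀(G ⧸ H, ℂ)) (a : A), ψ yH = 0 ∧ b = (Φ ψ).fst a}) := by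
    intro b hb
    refine Submodule.span_induction (fun _ ⟨ψ, c, hc⟩ => ?_) (by simp)
      (fun _ _ _ _ h₁ h₂ => by simpa using add_mem h₁ h₂)
      (fun r _ _ h => by simpa using Submodule.smul_mem _ r h) hb
    exact Submodule.subset_span ⟨φ * ψ - φ yH • ψ, c, by simp, hc ▸ hT_generator ψ c⟩
  change T a ∈ _
  exact map_mem_closure T.continuous (hnondeg ▸ Set.mem_univ a) hT_span

theorem c0_action_on_compactly_supported_sections_general
    {G : Type*} [Group G] [TopologicalSpace G] [IsTopologicalGroup G]
    (H : Subgroup G)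
    {A : Type*} [NonUnitalCStarAlgebra A]
    (Φ : C₀(G ⧸ H, ℂ) →⋆ₙₐ[ℂ] 𝓜(ℂ, A))
    -- nondegeneracy: the closed linear span of `{Φ(φ)·a}` is all of `A`
    (hnondeg : closure (Submodule.span ℂ
        {b : A | ∃ (φ : C₀(G ⧸ H, ℂ)) (a : A), b = (Φ φ).fst a} : Set A) = Set.univ)
    (θ : C₀(G × (G ⧸ H), ℂ))
    -- `θs x` is the slice `θ(x, ·)`, an element of `C₀(G/H)`
    (θs : G → C₀(G ⧸ H, ℂ)) (hθs : ∀ (x : G) (yH : G ⧸ H), θs x yH = θ (x, yH))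
    (f : G → A) (hf : Continuous f) (hf' : HasCompactSupport f)
    (g : G → A) (hg : ∀ x : G, g x = (Φ (θs x)).fst (f x)) :
    Continuous g ∧
      Function.support g ⊆ Function.support f ∧
      (∀ (x : G) (yH : G ⧸ H), g x - θ (x, yH) • f x ∈ idealJ H Φ yH) ∧
      (⨆ x : G, ‖g x‖) ≤ (⨆ p : G × (G ⧸ H), ‖θ p‖) * ⨆ x : G, ‖f x‖ := by
  obtain rfl : g = fun x => (Φ (θs x)).fst (f x) := funext hg
  refine ⟨?_, ?_, ?_, ?_⟩
  · exact (DoubleCentralizer.continuous_fst.comp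
      ((map_continuous Φ).comp (θ.continuous_slice hθs))).clm_apply hf
  · exact Function.support_subset_iff'.2 fun x hx => by simp [Function.notMem_support.1 hx]
  · intro x yH
    simpa [← hθs] using fst_apply_sub_smul_mem_idealJ H Φ hnondeg (θs x) yH (f x)
  · have hf_bdd : BddAbove (Set.range fun x => ‖f x‖) :=
      (hf'.norm.isCompact_range hf.norm).bddAbove
    rw [← θ.norm_eq_iSup_norm]
    refine Real.iSup_le (fun x => ?_)
      (mul_nonneg (norm_nonneg _) (Real.iSup_nonneg fun _ => norm_nonneg _))
    calc ‖(Φ (θs x)).fst (f x)‖ ≤ ‖θs x‖ * ‖f x‖ := Φ.norm_fst_apply_le _ _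
      _ ≤ ‖θ‖ * ⨆ x, ‖f x‖ := by
        gcongr
        exacts [θ.norm_slice_le hθs x, le_ciSup hf_bdd x]

/-- Let `θ ∈ C₀(G × G/H)` and let `f : G → A` be continuous with compact support.  Then
`g(x) := Φ(θ(x,·))·f(x)` (where `θ(x,·)` is the slice of `θ`, an element of `C₀(G/H)`)
is continuous, its support is contained in that of `f`, it satisfies
`g(x) − θ(x,yH)·f(x) ∈ J_{yH}` for all `x` and `yH`, and
`sup_x ‖g(x)‖ ≤ (sup |θ|)·(sup_x ‖f(x)‖)`. -/
theorem c0_action_on_compactly_supported_sections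
    {G : Type*} [Group G] [TopologicalSpace G] [IsTopologicalGroup G]
    [LocallyCompactSpace G] [T2Space G] [SecondCountableTopology G]
    (H : Subgroup G) (hH : IsClosed (H : Set G))
    {A : Type*} [NonUnitalCStarAlgebra A]
    (Φ : C₀(G ⧸ H, ℂ) →⋆ₙₐ[ℂ] 𝓜(ℂ, A))
    -- centrality: `Φ(φ)·a = a·Φ(φ)` for all `φ` and `a`
    (hcentral : ∀ (φ : C₀(G ⧸ H, ℂ)) (a : A), (Φ φ).fst a = (Φ φ).snd a)
    -- nondegeneracy: the closed linear span of `{Φ(φ)·a}` is all of `A`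
    (hnondeg : closure (Submodule.span ℂ
        {b : A | ∃ (φ : C₀(G ⧸ H, ℂ)) (a : A), b = (Φ φ).fst a} : Set A) = Set.univ)
    (θ : C₀(G × (G ⧸ H), ℂ))
    -- `θs x` is the slice `θ(x, ·)`, an element of `C₀(G/H)`
    (θs : G → C₀(G ⧸ H, ℂ)) (hθs : ∀ (x : G) (yH : G ⧸ H), θs x yH = θ (x, yH))
    (f : G → A) (hf : Continuous f) (hf' : HasCompactSupport f)
    (g : G → A) (hg : ∀ x : G, g x = (Φ (θs x)).fst (f x)) :
    Continuous g ∧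
      Function.support g ⊆ Function.support f ∧
      (∀ (x : G) (yH : G ⧸ H), g x - θ (x, yH) • f x ∈ idealJ H Φ yH) ∧
      (⨆ x : G, ‖g x‖) ≤ (⨆ p : G × (G ⧸ H), ‖θ p‖) * ⨆ x : G, ‖f x‖ :=
  c0_action_on_compactly_supported_sections_general H Φ hnondeg θ θs hθs f hf hf' g hg
end

section
/- For all finitely many functions ω₁, …, ωₙ ∈ C₀(G, ℂ) and φ₁, …, φₙ ∈ C₀(G/H, ℂ), and every continuous compactly supported f : G → A, one has sup_{x∈G} ‖Σ_{i=1}^{n} ωᵢ(x) (Φ(φᵢ)·f(x))‖ ≤ (sup_{(z,yH)∈G×(G/H)} |Σ_{i=1}^{n} ωᵢ(z)φᵢ(yH)|) · (sup_{x∈G} ‖f(x)‖). -/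
open scoped MultiplierAlgebra ZeroAtInfty

/-!
Evaluating the kernel `(z, yH) ↦ Σᵢ ωᵢ(z) φᵢ(yH)` at a fixed `z = x` gives the single function
`ψₓ = Σᵢ ωᵢ(x) • φᵢ ∈ C₀(G/H)`, whose sup norm is at most the sup of the kernel. By linearity the
`x`-th term on the left is `Φ(ψₓ)·f(x)`, and a ⋆-homomorphism of C⋆-algebras is contractive, so
its norm is at most `‖ψₓ‖ ‖f(x)‖`.
-/

namespace ZeroAtInftyContinuousMap

variable {X E : Type*} [TopologicalSpace X] [SeminormedAddCommGroup E]

theorem norm_coe_le_norm (f : C₀(X, E)) (x : X) : ‖f x‖ ≤ ‖f‖ :=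
  (f.toBCF.norm_coe_le_norm x).trans_eq norm_toBCF_eq_norm

theorem norm_le {f : C₀(X, E)} {C : ℝ} (hC : 0 ≤ C) : ‖f‖ ≤ C ↔ ∀ x, ‖f x‖ ≤ C := by
  rw [← norm_toBCF_eq_norm, BoundedContinuousFunction.norm_le hC]
  rfl

@[simp]
theorem sum_apply {ι : Type*} (s : Finset ι) (f : ι → C₀(X, E)) (x : X) :
    (∑ i ∈ s, f i) x = ∑ i ∈ s, f i x := by
  induction s using Finset.cons_induction <;> simp [*]

end ZeroAtInftyContinuousMap

namespace DoubleCentralizer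

variable {𝕜 A : Type*} [NontriviallyNormedField 𝕜] [NonUnitalNormedRing A] [NormedSpace 𝕜 A]
  [SMulCommClass 𝕜 A A] [IsScalarTower 𝕜 A A]

@[simp]
theorem sum_fst_apply {ι : Type*} (s : Finset ι) (m : ι → 𝓜(𝕜, A)) (a : A) :
    (∑ i ∈ s, m i).fst a = ∑ i ∈ s, (m i).fst a := by
  induction s using Finset.cons_induction <;> simp [*]

theorem norm_fst_apply_le [StarRing A] [CStarRing A] (m : 𝓜(𝕜, A)) (a : A) :
    ‖m.fst a‖ ≤ ‖m‖ * ‖a‖ :=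
  norm_fst m ▸ m.fst.le_opNorm a

end DoubleCentralizer

theorem bddAbove_range_norm_sum_mul {ι X Y : Type*} [TopologicalSpace X] [TopologicalSpace Y]
    (s : Finset ι) (ω : ι → C₀(X, ℂ)) (φ : ι → C₀(Y, ℂ)) :
    BddAbove (Set.range fun p : X × Y => ‖∑ i ∈ s, ω i p.1 * φ i p.2‖) := by
  refine ⟨∑ i ∈ s, ‖ω i‖ * ‖φ i‖, ?_⟩
  rintro _ ⟨p, rfl⟩
  refine (norm_sum_le _ _).trans (Finset.sum_le_sum fun i _ => ?_)
  rw [norm_mul]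
  gcongr
  exacts [(ω i).norm_coe_le_norm p.1, (φ i).norm_coe_le_norm p.2]

theorem norm_sum_smul_fst_le {X A ι : Type*} [TopologicalSpace X] [NonUnitalCStarAlgebra A]
    (Φ : C₀(X, ℂ) →⋆ₙₐ[ℂ] 𝓜(ℂ, A)) (s : Finset ι) (c : ι → ℂ) (φ : ι → C₀(X, ℂ)) (a : A)
    {C : ℝ} (hC : 0 ≤ C) (hbound : ∀ y, ‖∑ i ∈ s, c i * φ i y‖ ≤ C) :
    ‖∑ i ∈ s, c i • (Φ (φ i)).fst a‖ ≤ C * ‖a‖ := by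
  set ψ := ∑ i ∈ s, c i • φ i
  have hψ : ‖ψ‖ ≤ C := (ZeroAtInftyContinuousMap.norm_le hC).2 fun y => by simpa [ψ] using hbound y
  calc ‖∑ i ∈ s, c i • (Φ (φ i)).fst a‖ = ‖(Φ ψ).fst a‖ := by simp [ψ, map_sum]
    _ ≤ ‖Φ ψ‖ * ‖a‖ := (Φ ψ).norm_fst_apply_le a
    _ ≤ ‖ψ‖ * ‖a‖ := by gcongr; exact NonUnitalStarAlgHom.norm_apply_le Φ ψ
    _ ≤ C * ‖a‖ := by gcongr

theorem elementary_tensor_action_bound_general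
    {G : Type*} [Group G] [TopologicalSpace G]
    (H : Subgroup G)
    {A : Type*} [NonUnitalCStarAlgebra A]
    (Φ : C₀(G ⧸ H, ℂ) →⋆ₙₐ[ℂ] 𝓜(ℂ, A))
    (n : ℕ) (ω : Fin n → C₀(G, ℂ)) (φs : Fin n → C₀(G ⧸ H, ℂ))
    (f : G → A) (hf : Continuous f) (hf' : HasCompactSupport f) :
    (⨆ x : G, ‖∑ i : Fin n, ω i x • (Φ (φs i)).fst (f x)‖) ≤
      (⨆ p : G × (G ⧸ H), ‖∑ i : Fin n, ω i p.1 * φs i p.2‖) * ⨆ x : G, ‖f x‖ := by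
  set C := ⨆ p : G × (G ⧸ H), ‖∑ i : Fin n, ω i p.1 * φs i p.2‖
  have hkernel := bddAbove_range_norm_sum_mul Finset.univ ω φs
  have hf_bdd := hf.norm.bddAbove_range_of_hasCompactSupport hf'.norm
  have hC : 0 ≤ C := Real.iSup_nonneg fun _ => norm_nonneg _
  refine ciSup_le fun x => ?_
  calc _ ≤ C * ‖f x‖ :=
        norm_sum_smul_fst_le Φ Finset.univ (fun i => ω i x) φs (f x) hC
          fun y => le_ciSup hkernel (x, y)
    _ ≤ C * ⨆ x, ‖f x‖ := by gcongr; exact le_ciSup hf_bdd x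

/-- For finitely many `ω₁,…,ωₙ ∈ C₀(G)` and `φ₁,…,φₙ ∈ C₀(G/H)` and a continuous compactly
supported `f : G → A`, one has
`sup_x ‖Σᵢ ωᵢ(x)(Φ(φᵢ)·f(x))‖ ≤ (sup_{(z,yH)} |Σᵢ ωᵢ(z)φᵢ(yH)|)·(sup_x ‖f(x)‖)`. -/
theorem elementary_tensor_action_bound
    {G : Type*} [Group G] [TopologicalSpace G] [IsTopologicalGroup G]
    [LocallyCompactSpace G] [T2Space G] [SecondCountableTopology G]
    (H : Subgroup G) (hH : IsClosed (H : Set G))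
    {A : Type*} [NonUnitalCStarAlgebra A]
    (Φ : C₀(G ⧸ H, ℂ) →⋆ₙₐ[ℂ] 𝓜(ℂ, A))
    -- centrality: `Φ(φ)·a = a·Φ(φ)` for all `φ` and `a`
    (hcentral : ∀ (φ : C₀(G ⧸ H, ℂ)) (a : A), (Φ φ).fst a = (Φ φ).snd a)
    -- nondegeneracy: the closed linear span of `{Φ(φ)·a}` is all of `A`
    (hnondeg : closure (Submodule.span ℂ
        {b : A | ∃ (φ : C₀(G ⧸ H, ℂ)) (a : A), b = (Φ φ).fst a} : Set A) = Set.univ)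
    (n : ℕ) (ω : Fin n → C₀(G, ℂ)) (φs : Fin n → C₀(G ⧸ H, ℂ))
    (f : G → A) (hf : Continuous f) (hf' : HasCompactSupport f) :
    (⨆ x : G, ‖∑ i : Fin n, ω i x • (Φ (φs i)).fst (f x)‖) ≤
      (⨆ p : G × (G ⧸ H), ‖∑ i : Fin n, ω i p.1 * φs i p.2‖) * ⨆ x : G, ‖f x‖ :=
  elementary_tensor_action_bound_general H Φ n ω φs f hf hf'
end
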